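/- arXiv:2004.02187 — 4 statements merged into one kernel-verified Lean document; each statement's English description precedes it below -/
import Mathlib

section
/- Let γ be a nonnegative random variable with P(γ > 0) = 1 whose law has a probability density function f on (0, ∞), and define g(x) = ∫_x^∞ (1/x − 1/z) f(z) dz − 1 for x > 0. Then g(x) → +∞ as x → 0⁺. -/
open MeasureTheory ProbabilityTheory

/-- For an a.s.-positive random variable with density `f` on `(0, ∞)`,
`g x = ∫_x^∞ (1/x - 1/z) f z dz - 1` tends to `+∞` as `x → 0⁺`. -/
theorem opra_cutoff_limit_at_zero {Θ : Type*} [MeasureSpace Θ]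
    [IsProbabilityMeasure (ℙ : Measure Θ)]
    (γ : Θ → ℝ) (hγm : Measurable γ) (hγnn : ∀ ω, 0 ≤ γ ω)
    (hγpos : ℙ {ω | 0 < γ ω} = 1)
    (f : ℝ → ℝ) (hfm : Measurable f) (hfnn : ∀ x, 0 ≤ f x) (hf0 : ∀ x ≤ 0, f x = 0)
    (hf : Measure.map γ ℙ = volume.withDensity fun x => ENNReal.ofReal (f x))
    (g : ℝ → ℝ) (hg : ∀ x, g x = (∫ z in Set.Ioi x, (1 / x - 1 / z) * f z) - 1) :
    Filter.Tendsto g (nhdsWithin 0 (Set.Ioi 0)) Filter.atTop := by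
  set μ := volume.withDensity fun x => ENNReal.ofReal (f x) with hμdef
  have hmap : ∀ s, MeasurableSet s → μ s = ℙ (γ ⁻¹' s) := by
    intro s hs
    rw [← hf, Measure.map_apply hγm hs]
  have hIoi0 : μ (Set.Ioi 0) = 1 := by
    rw [hmap _ measurableSet_Ioi]
    have hpre : γ ⁻¹' Set.Ioi 0 = {ω | 0 < γ ω} := by ext ω; simp
    rw [hpre, hγpos]
  have huniv : μ Set.univ = 1 := by
    rw [hmap _ MeasurableSet.univ]; simp
  have hfint : Integrable f := by
    refine ⟨hfm.aestronglyMeasurable, ?_⟩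
    rw [hasFiniteIntegral_iff_ofReal (ae_of_all _ hfnn)]
    have h1 : ∫⁻ x, ENNReal.ofReal (f x) = 1 := by
      rw [← huniv, hμdef, withDensity_apply _ MeasurableSet.univ, Measure.restrict_univ]
    rw [h1]; exact ENNReal.one_lt_top
  obtain ⟨a, ha, hane⟩ : ∃ a > (0:ℝ), μ (Set.Ioi a) ≠ 0 := by
    by_contra h
    push_neg at h
    have hU : Set.Ioi (0:ℝ) = ⋃ n : ℕ, Set.Ioi ((n:ℝ)+1)⁻¹ := by
      ext x
      simp only [Set.mem_Ioi, Set.mem_iUnion]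
      constructor
      · intro hx
        obtain ⟨n, hn⟩ := exists_nat_one_div_lt hx
        exact ⟨n, by rwa [one_div] at hn⟩
      · rintro ⟨n, hn⟩
        exact lt_trans (by positivity) hn
    have h0 : μ (Set.Ioi (0:ℝ)) = 0 := by
      rw [hU]
      exact measure_iUnion_null fun n => h _ (by positivity)
    rw [hIoi0] at h0
    exact one_ne_zero h0
  set c : ℝ := ∫ z in Set.Ioi a, f z with hcdef
  have hμIoia : μ (Set.Ioi a) = ∫⁻ z in Set.Ioi a, ENNReal.ofReal (f z) := by
    rw [hμdef, withDensity_apply _ measurableSet_Ioi]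
  have hc : 0 < c := by
    rw [hcdef, integral_eq_lintegral_of_nonneg_ae (ae_of_all _ hfnn)
      hfm.aestronglyMeasurable, ← hμIoia]
    exact ENNReal.toReal_pos hane
      (lt_of_le_of_lt (measure_mono (Set.subset_univ _))
        (by rw [huniv]; exact ENNReal.one_lt_top)).ne
  have hintOn : ∀ x > (0:ℝ), IntegrableOn (fun z => (1/x - 1/z) * f z) (Set.Ioi x) := by
    intro x hx
    apply Integrable.mono ((hfint.const_mul (1/x)).integrableOn)
    · exact ((measurable_const.sub (measurable_one.div measurable_id)).mul
        hfm).aestronglyMeasurable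
    · filter_upwards [ae_restrict_mem measurableSet_Ioi] with z hz
      simp only [Set.mem_Ioi] at hz
      have hz0 : 0 < z := lt_trans hx hz
      rw [norm_mul, norm_mul, Real.norm_eq_abs, Real.norm_eq_abs, Real.norm_eq_abs,
        abs_of_nonneg (hfnn z)]
      have h1 : 0 ≤ 1/x - 1/z := by
        rw [sub_nonneg]; exact one_div_le_one_div_of_le hx hz.le
      refine mul_le_mul_of_nonneg_right ?_ (hfnn z)
      rw [abs_of_nonneg h1, abs_of_nonneg (by positivity : (0:ℝ) ≤ 1/x)]
      apply sub_le_self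
      positivity
  have hbound : ∀ x ∈ Set.Ioo 0 a, (1/x - 1/a) * c - 1 ≤ g x := by
    intro x hx
    rw [hg]
    have h1 : (1/x - 1/a) * c = ∫ z in Set.Ioi a, (1/x - 1/a) * f z := by
      rw [hcdef, integral_const_mul]
    have h2 : ∫ z in Set.Ioi a, (1/x - 1/a) * f z ≤ ∫ z in Set.Ioi a, (1/x - 1/z) * f z := by
      apply setIntegral_mono_on
      · exact (hfint.const_mul _).integrableOn
      · exact (hintOn x hx.1).mono_set (Set.Ioi_subset_Ioi hx.2.le)
      · exact measurableSet_Ioi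
      · intro z hz
        simp only [Set.mem_Ioi] at hz
        have hsub : 1/x - 1/a ≤ 1/x - 1/z := by
          have : 1/z ≤ 1/a := one_div_le_one_div_of_le ha hz.le
          linarith
        exact mul_le_mul_of_nonneg_right hsub (hfnn z)
    have h3 : ∫ z in Set.Ioi a, (1/x - 1/z) * f z ≤ ∫ z in Set.Ioi x, (1/x - 1/z) * f z := by
      apply setIntegral_mono_set (hintOn x hx.1)
      · filter_upwards [ae_restrict_mem measurableSet_Ioi] with z hz
        simp only [Set.mem_Ioi] at hz
        have h1' : 0 ≤ 1/x - 1/z := by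
          rw [sub_nonneg]; exact one_div_le_one_div_of_le hx.1 hz.le
        exact mul_nonneg h1' (hfnn z)
      · exact HasSubset.Subset.eventuallyLE (Set.Ioi_subset_Ioi hx.2.le)
    linarith
  have hφ : Filter.Tendsto (fun x => (1/x - 1/a) * c - 1) (nhdsWithin 0 (Set.Ioi 0))
      Filter.atTop := by
    apply Filter.tendsto_atTop_add_const_right
    apply Filter.Tendsto.atTop_mul_const hc
    apply Filter.tendsto_atTop_add_const_right
    exact tendsto_inv_nhdsGT_zero.congr fun x => (one_div x).symm
  refine Filter.tendsto_atTop_mono' _ ?_ hφ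
  filter_upwards [Ioo_mem_nhdsGT_of_mem (Set.mem_Ico.mpr ⟨le_refl 0, ha⟩)] with x hx
  exact hbound x hx
end

section
/- Let γ be a nonnegative random variable with P(γ > 0) = 1 whose law has a probability density function f that is continuous on (0, ∞), with cumulative distribution function F satisfying F(x) < 1 for every x > 0. Define g(x) = ∫_x^∞ (1/x − 1/z) f(z) dz − 1 for x > 0. Then there exists a unique γ* > 0 such that g(γ*) = 0; moreover g(x) > 0 for 0 < x < γ* and g(x) < 0 for x > γ*. -/
open MeasureTheory ProbabilityTheory

/-- For an a.s.-positive random variable with continuous density `f` on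
`(0, ∞)` and CDF `F < 1` on `(0, ∞)`, the function `g x = ∫_x^∞ (1/x - 1/z) f z dz - 1` has a
unique positive zero `γ*`, with `g > 0` on `(0, γ*)` and `g < 0` on `(γ*, ∞)`. -/
theorem opra_cutoff_exists_unique {Θ : Type*} [MeasureSpace Θ]
    [IsProbabilityMeasure (ℙ : Measure Θ)]
    (γ : Θ → ℝ) (hγm : Measurable γ) (hγnn : ∀ ω, 0 ≤ γ ω)
    (hγpos : ℙ {ω | 0 < γ ω} = 1)
    (f : ℝ → ℝ) (hfm : Measurable f) (hfnn : ∀ x, 0 ≤ f x) (hf0 : ∀ x ≤ 0, f x = 0)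
    (hfc : ContinuousOn f (Set.Ioi 0))
    (hf : Measure.map γ ℙ = volume.withDensity fun x => ENNReal.ofReal (f x))
    (F : ℝ → ℝ) (hF : ∀ x, F x = (ℙ {ω | γ ω ≤ x}).toReal)
    (hFlt : ∀ x : ℝ, 0 < x → F x < 1)
    (g : ℝ → ℝ) (hg : ∀ x, g x = (∫ z in Set.Ioi x, (1 / x - 1 / z) * f z) - 1) :
    ∃ γs : ℝ, 0 < γs ∧ g γs = 0
      ∧ (∀ x : ℝ, 0 < x → g x = 0 → x = γs)
      ∧ (∀ x : ℝ, 0 < x → x < γs → 0 < g x)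
      ∧ (∀ x : ℝ, γs < x → g x < 0) := by
  classical
  have hμprob : IsProbabilityMeasure (Measure.map γ ℙ) :=
    Measure.isProbabilityMeasure_map hγm.aemeasurable
  have hμs : ∀ s : Set ℝ, MeasurableSet s →
      (Measure.map γ ℙ) s = ∫⁻ z in s, ENNReal.ofReal (f z) := by
    intro s hs; rw [hf, withDensity_apply _ hs]
  -- f is integrable
  have hltotal : (∫⁻ z, ENNReal.ofReal (f z)) = 1 := by
    have h := hμs Set.univ MeasurableSet.univ
    rw [measure_univ] at h
    simpa using h.symm
  have hfint : Integrable f := by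
    refine ⟨hfm.aestronglyMeasurable, ?_⟩
    rw [hasFiniteIntegral_iff_ofReal (Filter.Eventually.of_forall hfnn), hltotal]
    exact ENNReal.one_lt_top
  -- set integral of f equals measure
  have hIs : ∀ s : Set ℝ, MeasurableSet s →
      (∫ z in s, f z) = ((Measure.map γ ℙ) s).toReal := by
    intro s hs
    rw [integral_eq_lintegral_of_nonneg_ae (Filter.Eventually.of_forall hfnn)
      hfm.aestronglyMeasurable.restrict, hμs s hs]
  -- tail integral equals 1 - F
  have hA : ∀ x : ℝ, (∫ z in Set.Ioi x, f z) = 1 - F x := by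
    intro x
    have h1 : (Measure.map γ ℙ) (Set.Iic x) = ℙ {ω | γ ω ≤ x} := by
      rw [Measure.map_apply hγm measurableSet_Iic]; rfl
    have h2 : (Measure.map γ ℙ) (Set.Ioi x)
        = 1 - (Measure.map γ ℙ) (Set.Iic x) := by
      have h := measure_compl (μ := Measure.map γ ℙ) (measurableSet_Iic (a := x))
        (measure_ne_top _ _)
      rw [Set.compl_Iic, measure_univ] at h
      exact h
    rw [hIs _ measurableSet_Ioi, h2,
      ENNReal.toReal_sub_of_le prob_le_one ENNReal.one_ne_top, hF x, h1]
    simp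
  have hFnn : ∀ x : ℝ, 0 ≤ F x := fun x => by rw [hF x]; exact ENNReal.toReal_nonneg
  -- integrability of the integrand on tails
  have hint : ∀ x : ℝ, 0 < x →
      IntegrableOn (fun z => (1 / x - 1 / z) * f z) (Set.Ioi x) := by
    intro x hx
    have hb : IntegrableOn (fun z => (1 / x) * f z) (Set.Ioi x) :=
      hfint.integrableOn.const_mul _
    refine Integrable.mono hb
      (((measurable_const.sub (measurable_const.div measurable_id)).mul
        hfm).aestronglyMeasurable.restrict) ?_
    refine (ae_restrict_iff' measurableSet_Ioi).2 (Filter.Eventually.of_forall fun z hz => ?_)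
    have hz' : 0 < z := hx.trans hz
    have h1 : 0 ≤ 1 / x - 1 / z := by
      have : 1 / z ≤ 1 / x := one_div_le_one_div_of_le hx (le_of_lt hz)
      linarith
    have h2 : 1 / x - 1 / z ≤ 1 / x := by
      have : 0 < 1 / z := by positivity
      linarith
    rw [Real.norm_eq_abs, Real.norm_eq_abs, abs_of_nonneg (mul_nonneg h1 (hfnn z)),
      abs_of_nonneg (mul_nonneg (by positivity) (hfnn z))]
    exact mul_le_mul_of_nonneg_right h2 (hfnn z)
  have hdivint : ∀ x : ℝ, 0 < x → IntegrableOn (fun z => f z / z) (Set.Ioi x) := by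
    intro x hx
    have hb : IntegrableOn (fun z => (1 / x) * f z) (Set.Ioi x) :=
      hfint.integrableOn.const_mul _
    refine Integrable.mono hb ((hfm.div measurable_id).aestronglyMeasurable.restrict) ?_
    refine (ae_restrict_iff' measurableSet_Ioi).2 (Filter.Eventually.of_forall fun z hz => ?_)
    have hz' : 0 < z := hx.trans hz
    have h1 : 0 ≤ f z / z := div_nonneg (hfnn z) hz'.le
    have h2 : f z / z ≤ (1 / x) * f z := by
      rw [div_eq_mul_inv, mul_comm]
      refine mul_le_mul_of_nonneg_right ?_ (hfnn z)
      rw [one_div]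
      exact inv_anti₀ hx (le_of_lt hz)
    rw [Real.norm_eq_abs, Real.norm_eq_abs, abs_of_nonneg h1,
      abs_of_nonneg (mul_nonneg (by positivity) (hfnn z))]
    exact h2
  -- splitting a tail integral
  have hsplit : ∀ (h : ℝ → ℝ) (x y : ℝ), x ≤ y → IntegrableOn h (Set.Ioi x) →
      (∫ z in Set.Ioi x, h z)
        = (∫ z in Set.Ioc x y, h z) + ∫ z in Set.Ioi y, h z := by
    intro h x y hxy hi
    have hd : Disjoint (Set.Ioc x y) (Set.Ioi y) := by
      refine Set.disjoint_left.2 fun z hz hz' => ?_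
      exact absurd hz.2 (not_le.2 hz')
    have hu : Set.Ioc x y ∪ Set.Ioi y = Set.Ioi x := Set.Ioc_union_Ioi_eq_Ioi hxy
    rw [← hu] at hi ⊢
    rw [setIntegral_union hd measurableSet_Ioi (hi.mono_set Set.subset_union_left)
      (hi.mono_set Set.subset_union_right)]
  -- strict antitonicity
  have hgmono : ∀ x y : ℝ, 0 < x → x < y → g y < g x := by
    intro x y hx hxy
    have hy : 0 < y := hx.trans hxy
    have hix := hint x hx
    have hiy := hint y hy
    have hAy : (0:ℝ) < ∫ z in Set.Ioi y, f z := by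
      rw [hA y]; linarith [hFlt y hy]
    have e1 : (∫ z in Set.Ioi x, (1 / x - 1 / z) * f z)
        = (∫ z in Set.Ioc x y, (1 / x - 1 / z) * f z)
          + ∫ z in Set.Ioi y, (1 / x - 1 / z) * f z :=
      hsplit _ x y hxy.le hix
    have e2 : (∫ z in Set.Ioi y, (1 / x - 1 / z) * f z)
        = (1 / x - 1 / y) * (∫ z in Set.Ioi y, f z)
          + ∫ z in Set.Ioi y, (1 / y - 1 / z) * f z := by
      rw [← integral_const_mul _ _,
        ← integral_add (hfint.integrableOn.const_mul _) hiy]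
      congr 1
      funext z
      ring
    have e3 : 0 ≤ ∫ z in Set.Ioc x y, (1 / x - 1 / z) * f z := by
      refine setIntegral_nonneg measurableSet_Ioc fun z hz => ?_
      refine mul_nonneg ?_ (hfnn z)
      have hz' : 0 < z := hx.trans hz.1
      have : 1 / z ≤ 1 / x := one_div_le_one_div_of_le hx (le_of_lt hz.1)
      linarith
    have e4 : 0 < (1 / x - 1 / y) * (∫ z in Set.Ioi y, f z) := by
      have h1 : 1 / y < 1 / x := one_div_lt_one_div_of_lt hx hxy
      exact mul_pos (by linarith) hAy
    rw [hg x, hg y, e1, e2]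
    linarith
  -- continuity of g on (0, ∞)
  have hcont : ∀ x₀ : ℝ, 0 < x₀ → ContinuousAt g x₀ := by
    intro x₀ hx₀
    set ε := x₀ / 2 with hεdef
    have hεpos : 0 < ε := by positivity
    have hεlt : ε < x₀ := by rw [hεdef]; linarith
    set f1 : ℝ → ℝ := (Set.Ioi ε).indicator f with hf1
    set f2 : ℝ → ℝ := (Set.Ioi ε).indicator (fun z => f z / z) with hf2
    have hif1 : Integrable f1 :=
      hfint.integrableOn.integrable_indicator measurableSet_Ioi
    have hif2 : Integrable f2 :=
      (hdivint ε hεpos).integrable_indicator measurableSet_Ioi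
    set M : ℝ → ℝ := fun x =>
      (1 / x) * ((∫ z in Set.Ioi ε, f z) - ∫ t in ε..x, f1 t)
        - ((∫ z in Set.Ioi ε, f z / z) - ∫ t in ε..x, f2 t) - 1 with hM
    have hMc : ContinuousAt M x₀ := by
      have c1 : Continuous fun x : ℝ => ∫ t in ε..x, f1 t :=
        hif1.continuous_primitive ε
      have c2 : Continuous fun x : ℝ => ∫ t in ε..x, f2 t :=
        hif2.continuous_primitive ε
      have cinv : ContinuousAt (fun x : ℝ => 1 / x) x₀ :=
        continuousAt_const.div continuousAt_id (ne_of_gt hx₀)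
      exact ((cinv.mul (continuousAt_const.sub c1.continuousAt)).sub
        (continuousAt_const.sub c2.continuousAt)).sub continuousAt_const
    have hev : g =ᶠ[nhds x₀] M := by
      filter_upwards [isOpen_Ioi.mem_nhds hεlt] with x hx
      have hxε : ε < x := hx
      have hxpos : 0 < x := hεpos.trans hxε
      -- tail integrals written via the indicator primitives
      have key : ∀ (h : ℝ → ℝ), IntegrableOn h (Set.Ioi ε) →
          (∫ z in Set.Ioi x, h z)
            = (∫ z in Set.Ioi ε, h z) - ∫ t in ε..x, (Set.Ioi ε).indicator h t := by
        intro h hi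
        rw [intervalIntegral.integral_of_le hxε.le]
        have hSS : Set.Ioc ε x ∩ Set.Ioi ε = Set.Ioc ε x :=
          Set.inter_eq_left.2 fun z hz => hz.1
        have : (∫ t in Set.Ioc ε x, (Set.Ioi ε).indicator h t) = ∫ t in Set.Ioc ε x, h t := by
          rw [setIntegral_indicator measurableSet_Ioi, hSS]
        rw [this, hsplit h ε x hxε.le hi]
        ring
      have k1 := key f hfint.integrableOn
      have k2 := key (fun z => f z / z) (hdivint ε hεpos)
      have dec : (∫ z in Set.Ioi x, (1 / x - 1 / z) * f z)
          = (1 / x) * (∫ z in Set.Ioi x, f z) - ∫ z in Set.Ioi x, f z / z := by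
        rw [← integral_const_mul _ _,
          ← integral_sub (hfint.integrableOn.const_mul _) (hdivint x hxpos)]
        congr 1
        funext z
        ring
      rw [hg x, hM, dec, k1, k2]
    exact hMc.congr hev.symm
  -- negativity at 2
  have hneg : g 2 < 0 := by
    rw [hg 2]
    have h1 : (∫ z in Set.Ioi (2:ℝ), (1 / 2 - 1 / z) * f z)
        ≤ ∫ z in Set.Ioi (2:ℝ), (1 / 2) * f z := by
      refine setIntegral_mono_on (hint 2 two_pos)
        (hfint.integrableOn.const_mul _) measurableSet_Ioi fun z hz => ?_
      have hz' : (0:ℝ) < z := lt_trans two_pos hz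
      have : 0 < 1 / z := by positivity
      refine mul_le_mul_of_nonneg_right (by linarith) (hfnn z)
    have h2 : (∫ z in Set.Ioi (2:ℝ), (1 / 2) * f z) = (1 / 2) * (1 - F 2) := by
      rw [integral_const_mul _ _, hA]
    have hF2 : 0 ≤ F 2 := hFnn 2
    linarith
  -- positivity at a small point
  set c := 1 - F 1 with hc
  have hcpos : 0 < c := by have := hFlt 1 one_pos; rw [hc]; linarith
  set ε₀ := c / (2 * (c + 1)) with hε₀
  have hε₀pos : 0 < ε₀ := by rw [hε₀]; positivity
  have hε₀lt : ε₀ < 1 := by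
    rw [hε₀, div_lt_one (by positivity)]
    linarith
  have hkey : 0 < (1 / ε₀ - 1) * c - 1 := by
    have h1 : (1 / ε₀) * c = 2 * (c + 1) := by
      rw [hε₀, one_div_div, div_mul_cancel₀ _ (ne_of_gt hcpos)]
    have : (1 / ε₀ - 1) * c - 1 = (1 / ε₀) * c - c - 1 := by ring
    rw [this, h1]
    linarith
  have hpos : 0 < g ε₀ := by
    rw [hg ε₀]
    have hi := hint ε₀ hε₀pos
    have hsp := hsplit _ ε₀ 1 hε₀lt.le hi
    have hIoc : 0 ≤ ∫ z in Set.Ioc ε₀ 1, (1 / ε₀ - 1 / z) * f z := by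
      refine setIntegral_nonneg measurableSet_Ioc fun z hz => ?_
      refine mul_nonneg ?_ (hfnn z)
      have : 1 / z ≤ 1 / ε₀ := one_div_le_one_div_of_le hε₀pos (le_of_lt hz.1)
      linarith
    have hlow : (1 / ε₀ - 1) * c ≤ ∫ z in Set.Ioi (1:ℝ), (1 / ε₀ - 1 / z) * f z := by
      have hm : (∫ z in Set.Ioi (1:ℝ), (1 / ε₀ - 1) * f z)
          ≤ ∫ z in Set.Ioi (1:ℝ), (1 / ε₀ - 1 / z) * f z := by
        refine setIntegral_mono_on (hfint.integrableOn.const_mul _)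
          (hi.mono_set (Set.Ioi_subset_Ioi hε₀lt.le)) measurableSet_Ioi fun z hz => ?_
        have hz1 : (1:ℝ) < z := hz
        have : 1 / z ≤ 1 := by
          rw [div_le_one (lt_trans one_pos hz1)]; linarith
        exact mul_le_mul_of_nonneg_right (by linarith) (hfnn z)
      have he : (∫ z in Set.Ioi (1:ℝ), (1 / ε₀ - 1) * f z) = (1 / ε₀ - 1) * c := by
        rw [integral_const_mul _ _, hA, hc]
      linarith
    rw [hsp]
    linarith
  -- IVT
  have hε₀2 : ε₀ ≤ 2 := by linarith
  have hconton : ContinuousOn g (Set.Icc ε₀ 2) := fun x hx =>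
    (hcont x (lt_of_lt_of_le hε₀pos hx.1)).continuousWithinAt
  have h02 : (0:ℝ) ∈ Set.Icc (g 2) (g ε₀) := ⟨hneg.le, hpos.le⟩
  obtain ⟨γs, hγsmem, hγs0⟩ := intermediate_value_Icc' hε₀2 hconton h02
  have hγspos : 0 < γs := lt_of_lt_of_le hε₀pos hγsmem.1
  refine ⟨γs, hγspos, hγs0, ?_, ?_, ?_⟩
  · intro x hx hgx
    rcases lt_trichotomy x γs with h | h | h
    · have := hgmono x γs hx h
      rw [hγs0, hgx] at this
      exact absurd this (lt_irrefl 0)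
    · exact h
    · have := hgmono γs x hγspos h
      rw [hγs0, hgx] at this
      exact absurd this (lt_irrefl 0)
  · intro x hx hlt
    have := hgmono x γs hx hlt
    rw [hγs0] at this
    exact this
  · intro x hlt
    have := hgmono γs x hγspos hlt
    rw [hγs0] at this
    exact this
end

section
/- Let m₁ be a positive integer, λ > 0, C > 0, z > 0, α₂ > 0, μ₂ > 0 and Ῡ > 0. Let γ₁ and γ₂ be independent random variables, where γ₁ has the Gamma(m₁, λ) density and γ₂ has the α-μ density with parameters (α₂, μ₂, Ῡ), with density f₂. Then P( γ₁γ₂/(γ₂ + C) ≤ z ) = 1 − e^{−λz} · Σ_{n=0}^{m₁−1} (1/n!) Σ_{p=0}^{n} C(n,p) (λz)^{n−p} (λCz)^{p} ∫_0^∞ x^{−p} e^{−λCz/x} f₂(x) dx, where C(n,p) denotes the binomial coefficient. -/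
/-!
Conditioning on `γ₂ = y > 0`, the event `γ₁ γ₂ / (γ₂ + C) ≤ z` is `γ₁ ≤ z + C z / y`, and for an
integer shape the Gamma law has the closed-form tail `P(γ₁ > t) = e^{-λt} ∑_{n<m} (λt)^n / n!`.
Expanding `(λz + λCz/y)^n` by the binomial theorem and integrating term by term against the
density of `γ₂` gives the formula; every term is integrable since `y^{-p} e^{-λCz/y} ≤ p!/(λCz)^p`.
-/

open MeasureTheory ProbabilityTheory
open Finset Real
open scoped Nat

/-- The tail `P(X > t)` of `X ~ Gamma(m, lam)` for an integer shape `m`. -/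
noncomputable def erlangSurvival (lam : ℝ) (m : ℕ) (t : ℝ) : ℝ :=
  exp (-lam * t) * ∑ n ∈ range m, (lam * t) ^ n / n !

@[fun_prop]
theorem measurable_erlangSurvival (lam : ℝ) (m : ℕ) : Measurable (erlangSurvival lam m) := by
  unfold erlangSurvival
  fun_prop

theorem hasDerivAt_sum_range_pow_div_factorial (m : ℕ) (x : ℝ) :
    HasDerivAt (fun x : ℝ => ∑ n ∈ range (m + 1), x ^ n / n !)
      (∑ n ∈ range m, x ^ n / n !) x := by
  induction m with
  | zero => simpa using hasDerivAt_const x (1 : ℝ)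
  | succ k ih =>
    simp_rw [sum_range_succ _ (k + 1)]
    rw [sum_range_succ (fun n => x ^ n / n !) k]
    refine ih.add ((hasDerivAt_pow (k + 1) x).div_const _ |>.congr_deriv ?_)
    rw [Nat.factorial_succ]
    push_cast
    field_simp

theorem hasDerivAt_erlangSurvival (lam : ℝ) (m : ℕ) (t : ℝ) :
    HasDerivAt (erlangSurvival lam (m + 1))
      (-(lam ^ (m + 1) * t ^ m * exp (-lam * t) / m !)) t := by
  have hexp : HasDerivAt (fun t => exp (-lam * t)) (exp (-lam * t) * -lam) t := by
    simpa using ((hasDerivAt_id t).const_mul (-lam)).exp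
  have hsum := (hasDerivAt_sum_range_pow_div_factorial m (lam * t)).comp t
    ((hasDerivAt_id t).const_mul lam)
  refine (hexp.mul hsum).congr_deriv ?_
  simp only [Function.comp_def, sum_range_succ, mul_pow]
  ring

theorem erlangSurvival_succ_zero (lam : ℝ) (m : ℕ) : erlangSurvival lam (m + 1) 0 = 1 := by
  simp [erlangSurvival, sum_range_succ', zero_pow_eq]

theorem erlangSurvival_nonneg {lam t : ℝ} (ht : 0 ≤ lam * t) (m : ℕ) :
    0 ≤ erlangSurvival lam m t := by
  unfold erlangSurvival
  positivity

theorem erlangSurvival_le_one {lam t : ℝ} (ht : 0 ≤ lam * t) (m : ℕ) :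
    erlangSurvival lam m t ≤ 1 := by
  rw [erlangSurvival, neg_mul, exp_neg, inv_mul_le_iff₀ (exp_pos _), mul_one]
  exact sum_le_exp_of_nonneg ht m

theorem integral_Ioc_erlang_density (lam : ℝ) (m : ℕ) {t : ℝ} (ht : 0 ≤ t) :
    ∫ x in Set.Ioc 0 t, lam ^ (m + 1) * x ^ m * exp (-lam * x) / m !
      = 1 - erlangSurvival lam (m + 1) t := by
  rw [← intervalIntegral.integral_of_le ht,
    intervalIntegral.integral_eq_sub_of_hasDerivAt
      (f := fun x => 1 - erlangSurvival lam (m + 1) x)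
      (fun x _ => (hasDerivAt_erlangSurvival lam m x).const_sub 1 |>.congr_deriv (neg_neg _))
      ((by fun_prop : Continuous _).intervalIntegrable _ _)]
  simp [erlangSurvival_succ_zero]

theorem withDensity_gamma_density_Iic {lam : ℝ} (hlam : 0 < lam) {m : ℕ} (hm : 0 < m) {t : ℝ}
    (ht : 0 ≤ t) :
    volume.withDensity (fun x => ENNReal.ofReal
      (if 0 < x then lam ^ m * x ^ (m - 1) * exp (-lam * x) / Gamma (m : ℝ) else 0)) (Set.Iic t)
      = ENNReal.ofReal (1 - erlangSurvival lam m t) := by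
  obtain ⟨k, rfl⟩ : ∃ k, m = k + 1 := ⟨m - 1, by omega⟩
  rw [withDensity_apply _ measurableSet_Iic, ← Set.Iic_union_Ioc_eq_Iic ht,
    lintegral_union measurableSet_Ioc (Set.Iic_disjoint_Ioc le_rfl),
    setLIntegral_congr_fun measurableSet_Iic (g := 0)
      fun x (hx : x ≤ 0) => by simp [not_lt.mpr hx],
    setLIntegral_congr_fun measurableSet_Ioc
      (g := fun x => ENNReal.ofReal (lam ^ (k + 1) * x ^ k * exp (-lam * x) / k !))
      fun x hx => by simp [hx.1, Gamma_nat_eq_factorial],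
    ← ofReal_integral_eq_lintegral_ofReal, integral_Ioc_erlang_density lam k ht]
  · simp
  · exact (by fun_prop : Continuous _).integrableOn_Ioc
  · filter_upwards [ae_restrict_mem measurableSet_Ioc] with x hx
    have := hx.1
    positivity

theorem erlangSurvival_add (lam s u : ℝ) (m : ℕ) :
    erlangSurvival lam m (s + u) = exp (-lam * s) * ∑ n ∈ range m, (1 / (n ! : ℝ)) *
      ∑ p ∈ range (n + 1), (n.choose p : ℝ) * (lam * s) ^ (n - p) * (lam * u) ^ p
        * exp (-lam * u) := by
  simp only [erlangSurvival, mul_add, neg_mul, exp_add, add_comm (lam * s), add_pow,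
    mul_sum, sum_div]
  refine sum_congr rfl fun n _ => sum_congr rfl fun p _ => ?_
  ring

theorem erlangSurvival_mul_add_div {y : ℝ} (hy : 0 < y) (lam C z : ℝ) (m : ℕ) :
    erlangSurvival lam m (z * (y + C) / y) = exp (-lam * z) * ∑ n ∈ range m, (1 / (n ! : ℝ)) *
      ∑ p ∈ range (n + 1), (n.choose p : ℝ) * (lam * z) ^ (n - p) * (lam * C * z) ^ p
        * (y ^ (-(p : ℝ)) * exp (-(lam * C * z) / y)) := by
  have hsplit : z * (y + C) / y = z + C * z / y := by field_simp
  rw [hsplit, erlangSurvival_add]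
  refine congrArg _ (sum_congr rfl fun n _ => congrArg _ (sum_congr rfl fun p _ => ?_))
  have hu : lam * (C * z / y) = lam * C * z / y := by ring
  have hneg : -lam * (C * z / y) = -(lam * C * z) / y := by ring
  rw [hu, hneg, div_pow, rpow_neg hy.le, rpow_natCast]
  ring

theorem rpow_neg_natCast_mul_exp_neg_div_le {c y : ℝ} (hc : 0 < c) (hy : 0 < y) (p : ℕ) :
    y ^ (-(p : ℝ)) * exp (-c / y) ≤ p ! / c ^ p := by
  have key := pow_div_factorial_le_exp _ (div_pos hc hy).le p
  rw [div_pow, div_le_iff₀ (by positivity), div_le_iff₀ (by positivity)] at key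
  rw [rpow_neg hy.le, rpow_natCast, le_div_iff₀ (by positivity), neg_div, exp_neg]
  calc (y ^ p)⁻¹ * (exp (c / y))⁻¹ * c ^ p
      = c ^ p * (y ^ p * exp (c / y))⁻¹ := by ring
    _ ≤ p ! := by
      rw [← div_eq_mul_inv, div_le_iff₀ (by positivity)]
      linarith

theorem ProbabilityTheory.IndepFun.measure_preimage_prodMk_eq_lintegral {Ω α β : Type*}
    [MeasurableSpace Ω] [MeasurableSpace α] [MeasurableSpace β] {μ : Measure Ω} [IsFiniteMeasure μ]
    {X : Ω → α} {Y : Ω → β} (hX : AEMeasurable X μ) (hY : AEMeasurable Y μ)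
    (h : IndepFun X Y μ) {s : Set (α × β)} (hs : MeasurableSet s) :
    μ ((fun ω => (X ω, Y ω)) ⁻¹' s) = ∫⁻ y, μ.map X ((fun x => (x, y)) ⁻¹' s) ∂μ.map Y := by
  rw [← Measure.map_apply_of_aemeasurable (hX.prodMk hY) hs,
    h.map_prod_eq_prod_map_map hX hY, Measure.prod_apply_symm hs]

theorem lintegral_ofReal_eq_one_of_isProbabilityMeasure_withDensity {α : Type*}
    [MeasurableSpace α] {μ : Measure α} {f : α → ℝ}
    (h : IsProbabilityMeasure (μ.withDensity fun x => ENNReal.ofReal (f x))) :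
    ∫⁻ x, ENNReal.ofReal (f x) ∂μ = 1 := by
  simpa [withDensity_apply _ MeasurableSet.univ] using h.measure_univ

theorem integrable_of_isProbabilityMeasure_withDensity {α : Type*} [MeasurableSpace α]
    {μ : Measure α} {f : α → ℝ} (hf : AEStronglyMeasurable f μ) (hf0 : ∀ x, 0 ≤ f x)
    (h : IsProbabilityMeasure (μ.withDensity fun x => ENNReal.ofReal (f x))) : Integrable f μ := by
  refine ⟨hf, ?_⟩
  rw [hasFiniteIntegral_iff_ofReal (ae_of_all _ hf0),
    lintegral_ofReal_eq_one_of_isProbabilityMeasure_withDensity h]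
  exact ENNReal.one_lt_top

theorem integral_eq_one_of_isProbabilityMeasure_withDensity {α : Type*} [MeasurableSpace α]
    {μ : Measure α} {f : α → ℝ} (hf : AEStronglyMeasurable f μ) (hf0 : ∀ x, 0 ≤ f x)
    (h : IsProbabilityMeasure (μ.withDensity fun x => ENNReal.ofReal (f x))) :
    ∫ x, f x ∂μ = 1 := by
  rw [integral_eq_lintegral_of_nonneg_ae (ae_of_all _ hf0) hf,
    lintegral_ofReal_eq_one_of_isProbabilityMeasure_withDensity h, ENNReal.toReal_one]

theorem preimage_prodMk_mul_div_add_le {C z y : ℝ} (hC : 0 ≤ C) (hy : 0 < y) :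
    (fun x => (x, y)) ⁻¹' {q : ℝ × ℝ | q.1 * q.2 / (q.2 + C) ≤ z} = Set.Iic (z * (y + C) / y) := by
  ext x
  change x * y / (y + C) ≤ z ↔ x ≤ z * (y + C) / y
  rw [div_le_iff₀ (by positivity), le_div_iff₀ hy]

theorem integrableOn_rpow_neg_natCast_mul_exp_neg_div_mul {f : ℝ → ℝ} (hf : Integrable f)
    {c : ℝ} (hc : 0 < c) (p : ℕ) :
    IntegrableOn (fun y => y ^ (-(p : ℝ)) * exp (-c / y) * f y) (Set.Ioi 0) := by
  refine hf.integrableOn.bdd_mul (c := p ! / c ^ p) (by fun_prop) ?_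
  filter_upwards [ae_restrict_mem measurableSet_Ioi] with y (hy : 0 < y)
  rw [Real.norm_of_nonneg (by positivity)]
  exact rpow_neg_natCast_mul_exp_neg_div_le hc hy p

theorem integrableOn_mul_erlangSurvival_mul_add_div {f : ℝ → ℝ} (hf : Integrable f) {lam C z : ℝ}
    (hlam : 0 ≤ lam) (hC : 0 ≤ C) (hz : 0 ≤ z) (m : ℕ) :
    IntegrableOn (fun y => f y * erlangSurvival lam m (z * (y + C) / y)) (Set.Ioi 0) := by
  refine hf.integrableOn.mul_bdd (c := 1) (by fun_prop : Measurable _).aestronglyMeasurable ?_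
  filter_upwards [ae_restrict_mem measurableSet_Ioi] with y (hy : 0 < y)
  have ht : 0 ≤ lam * (z * (y + C) / y) := by positivity
  rw [Real.norm_of_nonneg (erlangSurvival_nonneg ht m)]
  exact erlangSurvival_le_one ht m

theorem integral_Ioi_mul_erlangSurvival_mul_add_div {f : ℝ → ℝ} (hf : Integrable f)
    {lam C z : ℝ} (hc : 0 < lam * C * z) (m : ℕ) :
    ∫ y in Set.Ioi 0, f y * erlangSurvival lam m (z * (y + C) / y)
      = exp (-lam * z) * ∑ n ∈ range m, (1 / (n ! : ℝ)) *
          ∑ p ∈ range (n + 1), (n.choose p : ℝ) * (lam * z) ^ (n - p) * (lam * C * z) ^ p *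
            ∫ y in Set.Ioi 0, y ^ (-(p : ℝ)) * exp (-(lam * C * z) / y) * f y := by
  have hg := integrableOn_rpow_neg_natCast_mul_exp_neg_div_mul hf hc
  have hexpand : ∀ y ∈ Set.Ioi (0 : ℝ), f y * erlangSurvival lam m (z * (y + C) / y)
      = exp (-lam * z) * ∑ n ∈ range m, (1 / (n ! : ℝ)) *
          ∑ p ∈ range (n + 1), (n.choose p : ℝ) * (lam * z) ^ (n - p) * (lam * C * z) ^ p *
            (y ^ (-(p : ℝ)) * exp (-(lam * C * z) / y) * f y) := fun y hy => by
    rw [erlangSurvival_mul_add_div hy, mul_left_comm, mul_sum]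
    refine congrArg _ (sum_congr rfl fun n _ => ?_)
    rw [mul_left_comm, mul_sum]
    exact congrArg _ (sum_congr rfl fun p _ => by ring)
  rw [setIntegral_congr_fun measurableSet_Ioi hexpand, integral_const_mul, integral_finsetSum _
    fun n _ => (integrable_finsetSum _ fun p _ => (hg p).const_mul _).const_mul _]
  refine congrArg _ (sum_congr rfl fun n _ => ?_)
  rw [integral_const_mul, integral_finsetSum _ fun p _ => (hg p).const_mul _]
  exact congrArg _ (sum_congr rfl fun p _ => integral_const_mul _ _)

section GammaTimesDensity

variable {Ω : Type*} [MeasurableSpace Ω] {μ : Measure Ω} {m : ℕ} {lam C z : ℝ}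
  {γ₁ γ₂ : Ω → ℝ} {f : ℝ → ℝ}

theorem measure_mul_div_add_le_eq_lintegral [IsFiniteMeasure μ] (hm : 0 < m) (hlam : 0 < lam)
    (hC : 0 ≤ C) (hz : 0 ≤ z) (hγ₁m : Measurable γ₁) (hγ₂m : Measurable γ₂)
    (hindep : IndepFun γ₁ γ₂ μ)
    (hγ₁ : μ.map γ₁ = volume.withDensity fun x => ENNReal.ofReal
      (if 0 < x then lam ^ m * x ^ (m - 1) * exp (-lam * x) / Gamma (m : ℝ) else 0))
    (hf : Measurable f) (hf0 : ∀ x, 0 ≤ f x) (hf_nonpos : ∀ x ≤ 0, f x = 0)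
    (hγ₂ : μ.map γ₂ = volume.withDensity fun x => ENNReal.ofReal (f x)) :
    μ {ω | γ₁ ω * γ₂ ω / (γ₂ ω + C) ≤ z}
      = ∫⁻ y in Set.Ioi 0, ENNReal.ofReal (f y * (1 - erlangSurvival lam m (z * (y + C) / y))) := by
  have hS : MeasurableSet {q : ℝ × ℝ | q.1 * q.2 / (q.2 + C) ≤ z} :=
    measurableSet_le (by fun_prop) measurable_const
  change μ ((fun ω => (γ₁ ω, γ₂ ω)) ⁻¹' {q : ℝ × ℝ | q.1 * q.2 / (q.2 + C) ≤ z}) = _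
  rw [hindep.measure_preimage_prodMk_eq_lintegral hγ₁m.aemeasurable hγ₂m.aemeasurable hS, hγ₂,
    lintegral_withDensity_eq_lintegral_mul _ hf.ennreal_ofReal (measurable_measure_prodMk_right hS),
    ← lintegral_indicator measurableSet_Ioi]
  refine lintegral_congr fun y => ?_
  rcases le_or_gt y 0 with hy | hy
  · simp [hf_nonpos y hy, hy.not_gt]
  · rw [Set.indicator_of_mem (Set.mem_Ioi.mpr hy), Pi.mul_apply,
      preimage_prodMk_mul_div_add_le hC hy, hγ₁,
      withDensity_gamma_density_Iic hlam hm (by positivity), ENNReal.ofReal_mul (hf0 y)]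

theorem toReal_measure_mul_div_add_le [IsProbabilityMeasure μ] (hm : 0 < m) (hlam : 0 < lam)
    (hC : 0 < C) (hz : 0 < z) (hγ₁m : Measurable γ₁) (hγ₂m : Measurable γ₂)
    (hindep : IndepFun γ₁ γ₂ μ)
    (hγ₁ : μ.map γ₁ = volume.withDensity fun x => ENNReal.ofReal
      (if 0 < x then lam ^ m * x ^ (m - 1) * exp (-lam * x) / Gamma (m : ℝ) else 0))
    (hf : Measurable f) (hf0 : ∀ x, 0 ≤ f x) (hf_nonpos : ∀ x ≤ 0, f x = 0)
    (hγ₂ : μ.map γ₂ = volume.withDensity fun x => ENNReal.ofReal (f x)) :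
    (μ {ω | γ₁ ω * γ₂ ω / (γ₂ ω + C) ≤ z}).toReal
      = 1 - exp (-lam * z) * ∑ n ∈ range m, (1 / (n ! : ℝ)) *
          ∑ p ∈ range (n + 1), (n.choose p : ℝ) * (lam * z) ^ (n - p) * (lam * C * z) ^ p *
            ∫ x in Set.Ioi 0, x ^ (-(p : ℝ)) * exp (-(lam * C * z) / x) * f x := by
  have hprob : IsProbabilityMeasure (volume.withDensity fun x => ENNReal.ofReal (f x)) :=
    hγ₂ ▸ Measure.isProbabilityMeasure_map hγ₂m.aemeasurable
  have hf_int := integrable_of_isProbabilityMeasure_withDensity hf.aestronglyMeasurable hf0 hprob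
  have hf_Ioi : ∫ y in Set.Ioi 0, f y = 1 := by
    rw [setIntegral_eq_integral_of_forall_compl_eq_zero (s := Set.Ioi 0)
        fun y hy => hf_nonpos y (not_lt.mp hy),
      integral_eq_one_of_isProbabilityMeasure_withDensity hf.aestronglyMeasurable hf0 hprob]
  rw [measure_mul_div_add_le_eq_lintegral hm hlam hC.le hz.le hγ₁m hγ₂m hindep hγ₁ hf hf0
      hf_nonpos hγ₂, ← integral_eq_lintegral_of_nonneg_ae ?nonneg
      (by fun_prop : Measurable _).aestronglyMeasurable]
  case nonneg =>
    filter_upwards [ae_restrict_mem measurableSet_Ioi] with y (hy : 0 < y)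
    exact mul_nonneg (hf0 y) (sub_nonneg.mpr (erlangSurvival_le_one (by positivity) m))
  simp_rw [mul_one_sub]
  rw [integral_sub hf_int.integrableOn
      (integrableOn_mul_erlangSurvival_mul_add_div hf_int hlam.le hC.le hz.le m), hf_Ioi,
    integral_Ioi_mul_erlangSurvival_mul_add_div hf_int (by positivity)]

end GammaTimesDensity

/-- Exact CDF of the end-to-end SNR `γ₁ γ₂ / (γ₂ + C)` when `γ₁` is
`Gamma (m₁, lam)` with integer shape `m₁` and `γ₂` is `α`-`μ` distributed with density `f₂`. -/
theorem cdf_end_to_end_battery_case {Θ : Type*} [MeasureSpace Θ]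
    [IsProbabilityMeasure (ℙ : Measure Θ)]
    (m₁ : ℕ) (hm₁ : 0 < m₁) (lam C z α₂ μ₂ Υb : ℝ)
    (hlam : 0 < lam) (hC : 0 < C) (hz : 0 < z)
    (hα₂ : 0 < α₂) (hμ₂ : 0 < μ₂) (hΥb : 0 < Υb)
    (γ₁ γ₂ : Θ → ℝ) (hγ₁m : Measurable γ₁) (hγ₂m : Measurable γ₂)
    (hindep : IndepFun γ₁ γ₂ ℙ)
    (hγ₁ : Measure.map γ₁ ℙ = volume.withDensity fun x => ENNReal.ofReal
      (if 0 < x then lam ^ m₁ * x ^ (m₁ - 1) * Real.exp (-lam * x) / Real.Gamma (m₁ : ℝ)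
       else 0))
    (f₂ : ℝ → ℝ)
    (hf₂ : ∀ x : ℝ, f₂ x = if 0 < x then
        α₂ * μ₂ ^ μ₂ / (2 * Real.Gamma μ₂ * Υb) * (x / Υb) ^ (α₂ * μ₂ / 2 - 1)
          * Real.exp (-μ₂ * (x / Υb) ^ (α₂ / 2)) else 0)
    (hγ₂ : Measure.map γ₂ ℙ = volume.withDensity fun x => ENNReal.ofReal (f₂ x)) :
    (ℙ {ω | γ₁ ω * γ₂ ω / (γ₂ ω + C) ≤ z}).toReal
      = 1 - Real.exp (-lam * z) * ∑ n ∈ Finset.range m₁, (1 / (n.factorial : ℝ)) *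
          ∑ p ∈ Finset.range (n + 1),
            (n.choose p : ℝ) * (lam * z) ^ (n - p) * (lam * C * z) ^ p *
              ∫ x in Set.Ioi (0 : ℝ),
                x ^ (-(p : ℝ)) * Real.exp (-(lam * C * z) / x) * f₂ x := by
  have hf₂0 : ∀ x, 0 ≤ f₂ x := fun x => by
    rw [hf₂]
    split_ifs with hx
    · have := Gamma_pos_of_pos hμ₂
      have : 0 < x / Υb := by positivity
      positivity
    · exact le_rfl
  have hf₂m : Measurable f₂ := by
    rw [funext hf₂]
    exact Measurable.ite measurableSet_Ioi (by fun_prop) measurable_const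
  have hf₂_nonpos : ∀ x ≤ 0, f₂ x = 0 := fun x hx => by rw [hf₂, if_neg hx.not_gt]
  exact toReal_measure_mul_div_add_le hm₁ hlam hC hz hγ₁m hγ₂m hindep hγ₁ hf₂m hf₂0 hf₂_nonpos
    hγ₂
end

section
/- Let m₁ be a positive integer, λ > 0, C > 0, α₂ > 0, μ₂ > 0 and Ῡ > 0. Let γ₁ and γ₂ be independent random variables, where γ₁ has the Gamma(m₁, λ) density and γ₂ has the α-μ density with parameters (α₂, μ₂, Ῡ), with density f₂. Then E[ ln( 1 + γ₁γ₂/(γ₂ + C) ) ] = Σ_{n=0}^{m₁−1} (1/n!) Σ_{p=0}^{n} C(n,p) λ^{n} C^{p} ∫_0^∞ ( z^{n}/(1 + z) ) e^{−λz} ( ∫_0^∞ x^{−p} e^{−λCz/x} f₂(x) dx ) dz, where C(n,p) denotes the binomial coefficient. -/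
/-!
Conditionally on `γ₂ = x`, write `log (1 + u) = ∫₀ᵘ (1 + z)⁻¹ dz`; the layer-cake formula turns
`E[log (1 + a γ₁)]`, `a = x / (x + C)`, into `∫₀^∞ (1 + z)⁻¹ P(γ₁ ≥ z / a) dz`. For integer shape
the Gamma tail is the Erlang sum `P(γ₁ ≥ t) = e^{-λt} ∑_{n<m} (λt)ⁿ / n!`, and at `t = z (x + C) / x`
the binomial theorem splits `(x + C)ⁿ / xⁿ` into the powers `C^p x^{-p}`. Everything is nonnegative,
so Tonelli lets one integrate `x` against `f₂` first. The resulting sum is finite because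
`log (1 + γ₁ γ₂ / (γ₂ + C)) ≤ γ₁` and `γ₁` has finite mean, so it passes from `ℝ≥0∞` to `ℝ`
term by term.
-/

open MeasureTheory ProbabilityTheory Set Filter Topology
open scoped ENNReal

lemma integrableOn_pow_mul_exp_neg_mul (k : ℕ) {b : ℝ} (hb : 0 < b) :
    IntegrableOn (fun x => x ^ k * Real.exp (-b * x)) (Ioi 0) :=
  (integrableOn_rpow_mul_exp_neg_mul_rpow (s := k) (by linarith [k.cast_nonneg (α := ℝ)])
    one_pos hb).congr_fun (fun x _ => by simp) measurableSet_Ioi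

lemma Real.log_one_add_mul_div_le {x y C : ℝ} (hx : 0 ≤ x) (hy : 0 ≤ y) (hC : 0 ≤ C) :
    Real.log (1 + x * y / (y + C)) ≤ x := by
  have hu : 0 ≤ x * y / (y + C) := by positivity
  calc Real.log (1 + x * y / (y + C)) ≤ x * y / (y + C) := by
        linarith [Real.log_le_sub_one_of_pos (by linarith : 0 < 1 + x * y / (y + C))]
    _ ≤ x := div_le_of_le_mul₀ (by positivity) hx (by nlinarith)

lemma lintegral_ofReal_log_one_add {α : Type*} [MeasurableSpace α] (μ : Measure α) {f : α → ℝ}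
    (hf : Measurable f) (hf_nn : 0 ≤ᵐ[μ] f) :
    ∫⁻ a, ENNReal.ofReal (Real.log (1 + f a)) ∂μ
      = ∫⁻ z in Ioi 0, μ {a | z ≤ f a} * ENNReal.ofReal (1 + z)⁻¹ := by
  have hlog : ∀ c : ℝ, 0 ≤ c → Real.log (1 + c) = ∫ z in (0 : ℝ)..c, (1 + z)⁻¹ := fun c hc => by
    rw [intervalIntegral.integral_comp_add_left (fun z => z⁻¹),
      integral_inv_of_pos (by norm_num) (by linarith), add_zero, div_one]
  rw [← lintegral_comp_eq_lintegral_meas_le_mul (g := fun z => (1 + z)⁻¹) μ hf_nn hf.aemeasurable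
    (fun t ht => (ContinuousOn.inv₀ (by fun_prop) fun z hz => ?_).intervalIntegrable)
    ((ae_restrict_iff' measurableSet_Ioi).2 (ae_of_all _ fun z (hz : 0 < z) => ?_))]
  · exact lintegral_congr_ae (hf_nn.mono fun a ha => by dsimp only; rw [hlog _ ha])
  · rw [uIcc_of_le ht.le] at hz
    linarith [hz.1]
  · positivity

lemma ae_pos_withDensity {f : ℝ → ℝ} (hf : Measurable f) (hf0 : ∀ x ≤ 0, f x = 0) :
    ∀ᵐ x ∂volume.withDensity (fun x => ENNReal.ofReal (f x)), 0 < x := by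
  rw [ae_withDensity_iff (by fun_prop)]
  refine ae_of_all _ fun x hx => ?_
  by_contra h
  exact hx (by rw [hf0 x (not_lt.mp h), ENNReal.ofReal_zero])

lemma lintegral_lintegral_finsetSum {ι α β : Type*} [MeasurableSpace α] [MeasurableSpace β]
    {μ : Measure α} {ν : Measure β} [SFinite ν] (s : Finset ι) {g : ι → α → β → ℝ≥0∞}
    (hg : ∀ i ∈ s, Measurable (Function.uncurry (g i))) :
    ∫⁻ a, ∫⁻ b, ∑ i ∈ s, g i a b ∂ν ∂μ = ∑ i ∈ s, ∫⁻ a, ∫⁻ b, g i a b ∂ν ∂μ := by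
  calc ∫⁻ a, ∫⁻ b, ∑ i ∈ s, g i a b ∂ν ∂μ = ∫⁻ a, ∑ i ∈ s, ∫⁻ b, g i a b ∂ν ∂μ :=
        lintegral_congr fun a => lintegral_finsetSum s fun i hi =>
          (hg i hi).comp measurable_prodMk_left
    _ = _ := lintegral_finsetSum s fun i hi => (hg i hi).lintegral_prod_right'

lemma integral_integral_eq_toReal_lintegral_lintegral {α β : Type*} [MeasurableSpace α]
    [MeasurableSpace β] {μ : Measure α} {ν : Measure β} [SFinite ν] {F : α → β → ℝ}
    (hF : Measurable (Function.uncurry F)) (hF_nn : ∀ᵐ a ∂μ, ∀ b, 0 ≤ F a b)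
    (hF_fin : ∫⁻ a, ∫⁻ b, ENNReal.ofReal (F a b) ∂ν ∂μ ≠ ∞) :
    ∫ a, ∫ b, F a b ∂ν ∂μ = (∫⁻ a, ∫⁻ b, ENNReal.ofReal (F a b) ∂ν ∂μ).toReal := by
  have hG : Measurable fun a => ∫⁻ b, ENNReal.ofReal (F a b) ∂ν :=
    (ENNReal.measurable_ofReal.comp hF).lintegral_prod_right'
  rw [← integral_toReal hG.aemeasurable (ae_lt_top hG hF_fin)]
  refine integral_congr_ae (hF_nn.mono fun a ha => ?_)
  exact integral_eq_lintegral_of_nonneg_ae (ae_of_all _ ha)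
    (hF.comp measurable_prodMk_left).aestronglyMeasurable

lemma ProbabilityTheory.IndepFun.lintegral_comp_eq_lintegral_lintegral {Ω α β : Type*}
    [MeasurableSpace Ω] [MeasurableSpace α] [MeasurableSpace β] {μ : Measure Ω}
    [IsFiniteMeasure μ] {X : Ω → α} {Y : Ω → β} (hX : Measurable X) (hY : Measurable Y)
    (hXY : IndepFun X Y μ) {g : α → β → ℝ≥0∞} (hg : Measurable (Function.uncurry g)) :
    ∫⁻ ω, g (X ω) (Y ω) ∂μ = ∫⁻ y, ∫⁻ x, g x y ∂(μ.map X) ∂(μ.map Y) := by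
  calc ∫⁻ ω, g (X ω) (Y ω) ∂μ
      = ∫⁻ q, Function.uncurry g q ∂(μ.map fun ω => (X ω, Y ω)) :=
        (lintegral_map hg (hX.prodMk hY)).symm
    _ = ∫⁻ q, Function.uncurry g q ∂((μ.map X).prod (μ.map Y)) := by
        rw [(indepFun_iff_map_prod_eq_prod_map_map hX.aemeasurable hY.aemeasurable).1 hXY]
    _ = _ := lintegral_prod_symm _ hg.aemeasurable

lemma lintegral_ofReal_log_one_add_mul_div_ne_top {Ω : Type*} [MeasurableSpace Ω]
    {P : Measure Ω} {X Y : Ω → ℝ} {C : ℝ} (hC : 0 ≤ C) (hX : ∀ᵐ ω ∂P, 0 ≤ X ω)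
    (hY : ∀ᵐ ω ∂P, 0 ≤ Y ω) (hX_fin : ∫⁻ ω, ENNReal.ofReal (X ω) ∂P ≠ ∞) :
    ∫⁻ ω, ENNReal.ofReal (Real.log (1 + X ω * Y ω / (Y ω + C))) ∂P ≠ ∞ :=
  ne_top_of_le_ne_top hX_fin <| lintegral_mono_ae <| by
    filter_upwards [hX, hY] with ω hXω hYω
    exact ENNReal.ofReal_le_ofReal (Real.log_one_add_mul_div_le hXω hYω hC)

noncomputable def erlangTail (m : ℕ) (lam t : ℝ) : ℝ :=
  Real.exp (-lam * t) * ∑ n ∈ Finset.range m, (lam * t) ^ n / n.factorial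

noncomputable def erlangDensity (m : ℕ) (lam x : ℝ) : ℝ :=
  if 0 < x then lam ^ m * x ^ (m - 1) * Real.exp (-lam * x) / Real.Gamma m else 0

@[fun_prop]
lemma measurable_erlangDensity (m : ℕ) (lam : ℝ) : Measurable (erlangDensity m lam) :=
  Measurable.ite measurableSet_Ioi (by fun_prop) measurable_const

lemma erlangDensity_nonneg (m : ℕ) {lam : ℝ} (hlam : 0 ≤ lam) (x : ℝ) :
    0 ≤ erlangDensity m lam x := by
  unfold erlangDensity
  split_ifs
  · have := Real.Gamma_nonneg_of_nonneg m.cast_nonneg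
    positivity
  · rfl

lemma erlangDensity_of_nonpos (m : ℕ) (lam : ℝ) {x : ℝ} (hx : x ≤ 0) : erlangDensity m lam x = 0 :=
  if_neg (not_lt.2 hx)

lemma erlangDensity_succ_of_pos (m : ℕ) (lam : ℝ) {x : ℝ} (hx : 0 < x) :
    erlangDensity (m + 1) lam x = lam * (Real.exp (-lam * x) * (lam * x) ^ m / m.factorial) := by
  rw [erlangDensity, if_pos hx, Nat.cast_succ, Real.Gamma_nat_eq_factorial, Nat.add_sub_cancel]
  ring

lemma hasDerivAt_erlangTail_succ (m : ℕ) (lam t : ℝ) :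
    HasDerivAt (erlangTail (m + 1) lam)
      (-(lam * (Real.exp (-lam * t) * (lam * t) ^ m / m.factorial))) t := by
  have hexp : HasDerivAt (fun t => Real.exp (-lam * t)) (-lam * Real.exp (-lam * t)) t := by
    simpa [mul_comm] using ((hasDerivAt_id t).const_mul (-lam)).exp
  induction m with
  | zero =>
    have h1 : erlangTail 1 lam = fun t => Real.exp (-lam * t) := by funext t; simp [erlangTail]
    rw [h1]
    exact hexp.congr_deriv (by simp)
  | succ m ih =>
    have hsplit : erlangTail (m + 2) lam = fun t => erlangTail (m + 1) lam t
        + Real.exp (-lam * t) * (lam * t) ^ (m + 1) / (m + 1).factorial := by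
      funext t; simp only [erlangTail, Finset.sum_range_succ _ (m + 1)]; ring
    have hpow := ((hasDerivAt_id t).const_mul lam).fun_pow (m + 1)
    simp only [id, Nat.add_sub_cancel, mul_one] at hpow
    rw [hsplit]
    refine (ih.add ((hexp.mul hpow).div_const ((m + 1).factorial : ℝ))).congr_deriv ?_
    rw [Nat.factorial_succ]; push_cast
    field_simp
    ring

lemma tendsto_erlangTail_atTop (m : ℕ) {lam : ℝ} (hlam : 0 < lam) :
    Tendsto (erlangTail m lam) atTop (𝓝 0) := by
  have hlin : Tendsto (fun t => lam * t) atTop atTop := tendsto_id.const_mul_atTop hlam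
  have h := tendsto_finsetSum (Finset.range m) fun n _ =>
    ((Real.tendsto_pow_mul_exp_neg_atTop_nhds_zero n).comp hlin).div_const (n.factorial : ℝ)
  simp only [zero_div, Finset.sum_const_zero] at h
  refine h.congr fun t => ?_
  simp only [erlangTail, Finset.mul_sum, Function.comp_apply, neg_mul]
  exact Finset.sum_congr rfl fun n _ => by ring

lemma integrableOn_erlangDensity (m : ℕ) {lam : ℝ} (hlam : 0 < lam) :
    IntegrableOn (erlangDensity m lam) (Ioi 0) := by
  refine IntegrableOn.congr_fun
    (f := fun x => lam ^ m / Real.Gamma m * (x ^ (m - 1) * Real.exp (-lam * x)))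
    ((integrableOn_pow_mul_exp_neg_mul (m - 1) hlam).const_mul _)
    (fun x hx => ?_) measurableSet_Ioi
  rw [erlangDensity, if_pos (show 0 < x from hx)]
  ring

lemma integral_Ioi_erlangDensity {m : ℕ} (hm : 0 < m) {lam t : ℝ} (hlam : 0 < lam) (ht : 0 < t) :
    ∫ x in Ioi t, erlangDensity m lam x = erlangTail m lam t := by
  obtain ⟨m, rfl⟩ : ∃ k, m = k + 1 := ⟨m - 1, by omega⟩
  have hderiv : ∀ x ∈ Ici t, HasDerivAt (fun x => -erlangTail (m + 1) lam x)
      (erlangDensity (m + 1) lam x) x := fun x hx => by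
    rw [erlangDensity_succ_of_pos m lam (ht.trans_le hx)]
    exact (hasDerivAt_erlangTail_succ m lam x).neg.congr_deriv (neg_neg _)
  rw [integral_Ioi_of_hasDerivAt_of_tendsto' hderiv
    ((integrableOn_erlangDensity _ hlam).mono_set (Ioi_subset_Ioi ht.le))
    (by simpa only [neg_zero] using (tendsto_erlangTail_atTop (m + 1) hlam).neg)]
  ring

lemma withDensity_erlangDensity_Ici {m : ℕ} (hm : 0 < m) {lam t : ℝ} (hlam : 0 < lam)
    (ht : 0 < t) :
    volume.withDensity (fun x => ENNReal.ofReal (erlangDensity m lam x)) (Ici t)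
      = ENNReal.ofReal (erlangTail m lam t) := by
  rw [withDensity_apply _ measurableSet_Ici, Measure.restrict_congr_set Ioi_ae_eq_Ici.symm,
    ← ofReal_integral_eq_lintegral_ofReal
      ((integrableOn_erlangDensity m hlam).mono_set (Ioi_subset_Ioi ht.le))
      (ae_of_all _ (erlangDensity_nonneg m hlam.le)),
    integral_Ioi_erlangDensity hm hlam ht]

lemma lintegral_ofReal_withDensity_erlangDensity_ne_top {m : ℕ} (hm : 0 < m) {lam : ℝ}
    (hlam : 0 < lam) :
    ∫⁻ x, ENNReal.ofReal x ∂(volume.withDensity fun x => ENNReal.ofReal (erlangDensity m lam x))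
      ≠ ∞ := by
  have hint : Integrable (fun x => erlangDensity m lam x * x) := by
    refine IntegrableOn.integrable_of_forall_notMem_eq_zero (s := Ioi 0) ?_ fun x hx => by
      rw [erlangDensity_of_nonpos m lam (not_lt.1 hx), zero_mul]
    refine IntegrableOn.congr_fun
      (f := fun x => lam ^ m / Real.Gamma m * (x ^ m * Real.exp (-lam * x)))
      ((integrableOn_pow_mul_exp_neg_mul m hlam).const_mul _) (fun x hx => ?_) measurableSet_Ioi
    obtain ⟨k, rfl⟩ : ∃ k, m = k + 1 := ⟨m - 1, by omega⟩
    rw [erlangDensity, if_pos (show 0 < x from hx), Nat.add_sub_cancel, pow_succ]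
    ring
  rw [lintegral_withDensity_eq_lintegral_mul _ (by fun_prop) (by fun_prop)]
  simp_rw [Pi.mul_apply, ← ENNReal.ofReal_mul (erlangDensity_nonneg m hlam.le _)]
  exact hint.lintegral_lt_top.ne

lemma lintegral_log_one_add_mul_div_withDensity_erlang {m : ℕ} (hm : 0 < m) {lam C x : ℝ}
    (hlam : 0 < lam) (hC : 0 ≤ C) (hx : 0 < x) :
    ∫⁻ y, ENNReal.ofReal (Real.log (1 + y * x / (x + C)))
        ∂(volume.withDensity fun y => ENNReal.ofReal (erlangDensity m lam y))
      = ∫⁻ z in Ioi 0,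
          ENNReal.ofReal (erlangTail m lam (z * (x + C) / x)) * ENNReal.ofReal (1 + z)⁻¹ := by
  have hxC : 0 < x + C := by linarith
  have hpos := ae_pos_withDensity (measurable_erlangDensity m lam) fun _ =>
    erlangDensity_of_nonpos m lam
  rw [lintegral_ofReal_log_one_add _ (by fun_prop) (hpos.mono fun y hy => by
    show (0 : ℝ) ≤ _; positivity)]
  refine setLIntegral_congr_fun measurableSet_Ioi fun z (hz : 0 < z) => ?_
  have hset : {y | z ≤ y * x / (x + C)} = Ici (z * (x + C) / x) := by
    ext y
    rw [mem_ofPred_eq, mem_Ici, le_div_iff₀ hxC, div_le_iff₀ hx]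
  rw [hset, withDensity_erlangDensity_Ici hm hlam (by positivity)]

lemma erlangTail_mul_add_div {x : ℝ} (hx : 0 < x) (m : ℕ) (lam C z : ℝ) :
    erlangTail m lam (z * (x + C) / x)
      = ∑ n ∈ Finset.range m, ∑ p ∈ Finset.range (n + 1),
          n.choose p * lam ^ n * C ^ p / n.factorial *
            (z ^ n * Real.exp (-lam * z)) * (x ^ (-(p : ℝ)) * Real.exp (-(lam * C * z) / x)) := by
  have hexp : Real.exp (-lam * (z * (x + C) / x))
      = Real.exp (-lam * z) * Real.exp (-(lam * C * z) / x) := by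
    rw [← Real.exp_add]; congr 1; field_simp; ring
  rw [erlangTail, hexp, Finset.mul_sum]
  refine Finset.sum_congr rfl fun n _ => ?_
  rw [mul_div_assoc', mul_pow, div_pow, mul_pow, add_comm x C, add_pow]
  simp only [Finset.mul_sum, Finset.sum_div]
  refine Finset.sum_congr rfl fun p hp => ?_
  have hpn : p ≤ n := Finset.mem_range_succ_iff.mp hp
  have hxp : x ^ (-(p : ℝ)) = x ^ (n - p) / x ^ n := by
    rw [Real.rpow_neg hx.le, Real.rpow_natCast, pow_sub₀ x hx.ne' hpn]
    field_simp
  rw [hxp]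
  field_simp

noncomputable def oraTerm (lam C : ℝ) (f : ℝ → ℝ) (n p : ℕ) (z x : ℝ) : ℝ :=
  1 / n.factorial * (n.choose p * lam ^ n * C ^ p *
    (z ^ n / (1 + z) * Real.exp (-lam * z) *
      (x ^ (-(p : ℝ)) * Real.exp (-(lam * C * z) / x) * f x)))

section oraTerm

variable {lam C : ℝ} {f : ℝ → ℝ}

lemma sum_oraTerm (hf0 : ∀ x ≤ 0, f x = 0) (m : ℕ) (z x : ℝ) :
    ∑ n ∈ Finset.range m, ∑ p ∈ Finset.range (n + 1), oraTerm lam C f n p z x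
      = f x * ((1 + z)⁻¹ * erlangTail m lam (z * (x + C) / x)) := by
  rcases le_or_gt x 0 with hx | hx
  · simp [oraTerm, hf0 x hx]
  · rw [erlangTail_mul_add_div hx]
    simp only [Finset.mul_sum]
    refine Finset.sum_congr rfl fun n _ => Finset.sum_congr rfl fun p _ => ?_
    rw [oraTerm]
    ring

lemma oraTerm_nonneg (hlam : 0 ≤ lam) (hC : 0 ≤ C) (hf : ∀ x, 0 ≤ f x)
    (hf0 : ∀ x ≤ 0, f x = 0) (n p : ℕ) {z : ℝ} (hz : 0 ≤ z) (x : ℝ) :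
    0 ≤ oraTerm lam C f n p z x := by
  rcases le_or_gt x 0 with hx | hx
  · simp [oraTerm, hf0 x hx]
  · have := hf x
    unfold oraTerm
    positivity

@[fun_prop]
lemma measurable_oraTerm (hf : Measurable f) (n p : ℕ) :
    Measurable (Function.uncurry (oraTerm lam C f n p)) := by
  unfold oraTerm
  fun_prop

lemma integral_integral_oraTerm (hf0 : ∀ x ≤ 0, f x = 0) (n p : ℕ) :
    1 / (n.factorial : ℝ) * (n.choose p * lam ^ n * C ^ p *
      ∫ z in Ioi 0, z ^ n / (1 + z) * Real.exp (-lam * z) *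
        ∫ x in Ioi 0, x ^ (-(p : ℝ)) * Real.exp (-(lam * C * z) / x) * f x)
      = ∫ z in Ioi 0, ∫ x, oraTerm lam C f n p z x := by
  have hIoi : ∀ z, ∫ x in Ioi 0, x ^ (-(p : ℝ)) * Real.exp (-(lam * C * z) / x) * f x
      = ∫ x, x ^ (-(p : ℝ)) * Real.exp (-(lam * C * z) / x) * f x := fun z =>
    setIntegral_eq_integral_of_forall_compl_eq_zero fun x hx => by
      rw [hf0 x (not_lt.1 hx), mul_zero]
  simp only [oraTerm, integral_const_mul, hIoi]

end oraTerm

lemma lintegral_lintegral_log_erlang_eq_sum_oraTerm {m : ℕ} (hm : 0 < m) {lam C : ℝ}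
    (hlam : 0 < lam) (hC : 0 ≤ C) {f : ℝ → ℝ} (hf_meas : Measurable f) (hf_nn : ∀ x, 0 ≤ f x)
    (hf0 : ∀ x ≤ 0, f x = 0) :
    ∫⁻ x, ∫⁻ y, ENNReal.ofReal (Real.log (1 + y * x / (x + C)))
        ∂(volume.withDensity fun y => ENNReal.ofReal (erlangDensity m lam y))
        ∂(volume.withDensity fun x => ENNReal.ofReal (f x))
      = ∑ n ∈ Finset.range m, ∑ p ∈ Finset.range (n + 1),
          ∫⁻ z in Ioi 0, ∫⁻ x, ENNReal.ofReal (oraTerm lam C f n p z x) := by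
  have hterm_nn := oraTerm_nonneg hlam.le hC hf_nn hf0
  have hterm_meas (n p : ℕ) :
      Measurable (Function.uncurry fun z x => ENNReal.ofReal (oraTerm lam C f n p z x)) :=
    ENNReal.measurable_ofReal.comp (measurable_oraTerm hf_meas n p)
  have hinner : Measurable fun x => ∫⁻ y, ENNReal.ofReal (Real.log (1 + y * x / (x + C)))
      ∂(volume.withDensity fun y => ENNReal.ofReal (erlangDensity m lam y)) :=
    Measurable.lintegral_prod_left'
      (f := fun q : ℝ × ℝ => ENNReal.ofReal (Real.log (1 + q.1 * q.2 / (q.2 + C)))) (by fun_prop)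
  rw [lintegral_withDensity_eq_lintegral_mul _ (by fun_prop) hinner]
  calc ∫⁻ x, ENNReal.ofReal (f x) * ∫⁻ y, ENNReal.ofReal (Real.log (1 + y * x / (x + C)))
          ∂(volume.withDensity fun y => ENNReal.ofReal (erlangDensity m lam y))
      = ∫⁻ x, ∫⁻ z in Ioi 0, ∑ n ∈ Finset.range m, ∑ p ∈ Finset.range (n + 1),
          ENNReal.ofReal (oraTerm lam C f n p z x) := lintegral_congr fun x => by
        rcases le_or_gt x 0 with hx | hx
        · simp [oraTerm, hf0 x hx]
        rw [lintegral_log_one_add_mul_div_withDensity_erlang hm hlam hC hx,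
          ← lintegral_const_mul' _ _ ENNReal.ofReal_ne_top]
        refine setLIntegral_congr_fun measurableSet_Ioi fun z (hz : 0 < z) => ?_
        have hsum : ENNReal.ofReal (∑ n ∈ Finset.range m, ∑ p ∈ Finset.range (n + 1),
            oraTerm lam C f n p z x) = ∑ n ∈ Finset.range m, ∑ p ∈ Finset.range (n + 1),
              ENNReal.ofReal (oraTerm lam C f n p z x) := by
          rw [ENNReal.ofReal_sum_of_nonneg fun n _ =>
            Finset.sum_nonneg fun p _ => hterm_nn n p hz.le x]
          exact Finset.sum_congr rfl fun n _ =>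
            ENNReal.ofReal_sum_of_nonneg fun p _ => hterm_nn n p hz.le x
        rw [← hsum, sum_oraTerm hf0, ENNReal.ofReal_mul (hf_nn x),
          ENNReal.ofReal_mul (by positivity)]
        ring
    _ = ∫⁻ z in Ioi 0, ∫⁻ x, ∑ n ∈ Finset.range m, ∑ p ∈ Finset.range (n + 1),
          ENNReal.ofReal (oraTerm lam C f n p z x) :=
        lintegral_lintegral_swap ((Finset.measurable_sum _ fun n _ => Finset.measurable_sum _
          fun p _ => (hterm_meas n p).comp measurable_swap).aemeasurable)
    _ = _ := by
        rw [lintegral_lintegral_finsetSum _ fun n _ => Finset.measurable_sum _ fun p _ =>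
          hterm_meas n p]
        exact Finset.sum_congr rfl fun n _ =>
          lintegral_lintegral_finsetSum _ fun p _ => hterm_meas n p

lemma lintegral_log_one_add_mul_div_eq_sum_oraTerm {Ω : Type*} [MeasurableSpace Ω]
    {P : Measure Ω} [IsFiniteMeasure P] {X Y : Ω → ℝ} (hX : Measurable X) (hY : Measurable Y)
    (hXY : IndepFun X Y P) {m : ℕ} (hm : 0 < m) {lam C : ℝ} (hlam : 0 < lam) (hC : 0 ≤ C)
    (hlawX : P.map X = volume.withDensity fun x => ENNReal.ofReal (erlangDensity m lam x))
    {f : ℝ → ℝ} (hf_meas : Measurable f) (hf_nn : ∀ x, 0 ≤ f x) (hf0 : ∀ x ≤ 0, f x = 0)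
    (hlawY : P.map Y = volume.withDensity fun x => ENNReal.ofReal (f x)) :
    ∫⁻ ω, ENNReal.ofReal (Real.log (1 + X ω * Y ω / (Y ω + C))) ∂P
      = ∑ n ∈ Finset.range m, ∑ p ∈ Finset.range (n + 1),
          ∫⁻ z in Ioi 0, ∫⁻ x, ENNReal.ofReal (oraTerm lam C f n p z x) := by
  rw [hXY.lintegral_comp_eq_lintegral_lintegral hX hY
    (g := fun y x => ENNReal.ofReal (Real.log (1 + y * x / (x + C)))) (by fun_prop), hlawX, hlawY]
  exact lintegral_lintegral_log_erlang_eq_sum_oraTerm hm hlam hC hf_meas hf_nn hf0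

noncomputable def alphaMuDensity (α μ Υ x : ℝ) : ℝ :=
  if 0 < x then
    α * μ ^ μ / (2 * Real.Gamma μ * Υ) * (x / Υ) ^ (α * μ / 2 - 1)
      * Real.exp (-μ * (x / Υ) ^ (α / 2))
  else 0

lemma alphaMuDensity_of_nonpos (α μ Υ : ℝ) {x : ℝ} (hx : x ≤ 0) : alphaMuDensity α μ Υ x = 0 :=
  if_neg (not_lt.2 hx)

lemma alphaMuDensity_nonneg {α μ Υ : ℝ} (hα : 0 ≤ α) (hμ : 0 < μ) (hΥ : 0 < Υ) (x : ℝ) :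
    0 ≤ alphaMuDensity α μ Υ x := by
  unfold alphaMuDensity
  split_ifs with hx
  · have := Real.Gamma_pos_of_pos hμ
    have := div_pos hx hΥ
    positivity
  · rfl

@[fun_prop]
lemma measurable_alphaMuDensity (α μ Υ : ℝ) : Measurable (alphaMuDensity α μ Υ) :=
  Measurable.ite measurableSet_Ioi (by fun_prop) measurable_const

/-- Exact ORA capacity integral `E[ln (1 + γ₁ γ₂ / (γ₂ + C))]` when `γ₁` is
`Gamma (m₁, lam)` with integer shape and `γ₂` is `α`-`μ` distributed with density `f₂`. -/
theorem ora_end_to_end_battery_case {Θ : Type*} [MeasureSpace Θ]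
    [IsProbabilityMeasure (ℙ : Measure Θ)]
    (m₁ : ℕ) (hm₁ : 0 < m₁) (lam C α₂ μ₂ Υb : ℝ)
    (hlam : 0 < lam) (hC : 0 < C)
    (hα₂ : 0 < α₂) (hμ₂ : 0 < μ₂) (hΥb : 0 < Υb)
    (γ₁ γ₂ : Θ → ℝ) (hγ₁m : Measurable γ₁) (hγ₂m : Measurable γ₂)
    (hindep : IndepFun γ₁ γ₂ ℙ)
    (hγ₁ : Measure.map γ₁ ℙ = volume.withDensity fun x => ENNReal.ofReal
      (if 0 < x then lam ^ m₁ * x ^ (m₁ - 1) * Real.exp (-lam * x) / Real.Gamma (m₁ : ℝ)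
       else 0))
    (f₂ : ℝ → ℝ)
    (hf₂ : ∀ x : ℝ, f₂ x = if 0 < x then
        α₂ * μ₂ ^ μ₂ / (2 * Real.Gamma μ₂ * Υb) * (x / Υb) ^ (α₂ * μ₂ / 2 - 1)
          * Real.exp (-μ₂ * (x / Υb) ^ (α₂ / 2)) else 0)
    (hγ₂ : Measure.map γ₂ ℙ = volume.withDensity fun x => ENNReal.ofReal (f₂ x)) :
    ∫ ω, Real.log (1 + γ₁ ω * γ₂ ω / (γ₂ ω + C))
      = ∑ n ∈ Finset.range m₁, (1 / (n.factorial : ℝ)) *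
          ∑ p ∈ Finset.range (n + 1),
            (n.choose p : ℝ) * lam ^ n * C ^ p *
              ∫ z in Set.Ioi (0 : ℝ), z ^ n / (1 + z) * Real.exp (-lam * z) *
                ∫ x in Set.Ioi (0 : ℝ),
                  x ^ (-(p : ℝ)) * Real.exp (-(lam * C * z) / x) * f₂ x := by
  obtain rfl : f₂ = alphaMuDensity α₂ μ₂ Υb := funext hf₂
  have hlaw₁ : Measure.map γ₁ ℙ
      = volume.withDensity fun x => ENNReal.ofReal (erlangDensity m₁ lam x) := hγ₁
  have hpos₁ : ∀ᵐ ω ∂ℙ, 0 < γ₁ ω := ae_of_ae_map hγ₁m.aemeasurable <| hlaw₁ ▸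
    ae_pos_withDensity (measurable_erlangDensity _ _) fun _ => erlangDensity_of_nonpos _ _
  have hpos₂ : ∀ᵐ ω ∂ℙ, 0 < γ₂ ω := ae_of_ae_map hγ₂m.aemeasurable <| hγ₂ ▸
    ae_pos_withDensity (measurable_alphaMuDensity _ _ _) fun _ => alphaMuDensity_of_nonpos _ _ _
  have hf_nn := alphaMuDensity_nonneg hα₂.le hμ₂ hΥb
  have hf0 : ∀ x ≤ 0, alphaMuDensity α₂ μ₂ Υb x = 0 := fun _ => alphaMuDensity_of_nonpos _ _ _
  have hE := lintegral_log_one_add_mul_div_eq_sum_oraTerm hγ₁m hγ₂m hindep hm₁ hlam hC.le hlaw₁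
    (measurable_alphaMuDensity _ _ _) hf_nn hf0 hγ₂
  have hfin := lintegral_ofReal_log_one_add_mul_div_ne_top hC.le (hpos₁.mono fun _ h => h.le)
    (hpos₂.mono fun _ h => h.le) (by
      rw [← lintegral_map (by fun_prop) hγ₁m, hlaw₁]
      exact lintegral_ofReal_withDensity_erlangDensity_ne_top hm₁ hlam)
  rw [hE, ENNReal.sum_ne_top] at hfin
  rw [integral_eq_lintegral_of_nonneg_ae ?_ (Measurable.aestronglyMeasurable (by fun_prop)), hE,
    ENNReal.toReal_sum hfin]
  · refine Finset.sum_congr rfl fun n hn => ?_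
    rw [ENNReal.toReal_sum (ENNReal.sum_ne_top.1 (hfin n hn)), Finset.mul_sum]
    refine Finset.sum_congr rfl fun p hp => ?_
    rw [integral_integral_oraTerm hf0]
    exact (integral_integral_eq_toReal_lintegral_lintegral (measurable_oraTerm (by fun_prop) n p)
      ((ae_restrict_iff' measurableSet_Ioi).2 (ae_of_all _ fun z (hz : 0 < z) =>
        oraTerm_nonneg hlam.le hC.le hf_nn hf0 n p hz.le))
      (ENNReal.sum_ne_top.1 (hfin n hn) p hp)).symm
  · filter_upwards [hpos₁, hpos₂] with ω h₁ h₂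
    exact Real.log_nonneg (le_add_of_nonneg_right (by positivity))
end
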